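/- arXiv:2204.07345 — 3 statements merged into one kernel-verified Lean document; each statement's English description precedes it below -/
import Mathlib

section
/- Let n ≥ 2 and let S = (x_1,…,x_k) be a sequence in Z_n. Then S is a U(n)-weighted zero-sum sequence if and only if for every prime divisor p of n, the sequence S^{(p)} = (f_p(x_1),…,f_p(x_k)) is a U(p^{v_p(n)})-weighted zero-sum sequence in Z_{p^{v_p(n)}}, where v_p(n) is the exponent of p in n and f_p : Z_n → Z_{p^{v_p(n)}} is the natural reduction map. -/
open Classical in
/-- The number of terms of the sequence `S` satisfying the predicate `P`. -/
noncomputable def pcount {α : Type*} (P : α → Prop) (S : List α) : ℕ :=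
  S.countP fun x => decide (P x)

/-- `S` is an `A`-weighted zero-sum sequence in `ZMod n`: there are weights
`a i ∈ A` with `∑ a i * x i = 0`. -/
def IsWZSum {n : ℕ} (A : Set (ZMod n)) (S : List (ZMod n)) : Prop :=
  ∃ w : List (ZMod n), w.length = S.length ∧ (∀ a ∈ w, a ∈ A) ∧
    (List.zipWith (· * ·) w S).sum = 0

/-- `S` has an `A`-weighted zero-sum subsequence of length `t ≥ 1`. -/
def HasWZSS {n : ℕ} (A : Set (ZMod n)) (S : List (ZMod n)) (t : ℕ) : Prop :=
  0 < t ∧ ∃ T : List (ZMod n), T.Sublist S ∧ T.length = t ∧ IsWZSum A T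

/-- `S` has a nonempty `A`-weighted zero-sum subsequence. -/
def HasWZS {n : ℕ} (A : Set (ZMod n)) (S : List (ZMod n)) : Prop :=
  ∃ T : List (ZMod n), T.Sublist S ∧ T ≠ [] ∧ IsWZSum A T

/-- The `A`-weighted Davenport constant `D_A(n)`: the least `k > 0` such that every
sequence of length `k` in `ZMod n` has a nonempty `A`-weighted zero-sum subsequence. -/
noncomputable def DavC (n : ℕ) (A : Set (ZMod n)) : ℕ :=
  sInf {k | 0 < k ∧ ∀ S : List (ZMod n), S.length = k → HasWZS A S}

/-- The `A`-weighted Gao constant `E_A(n)`: the least `k > 0` such that every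
sequence of length `k` in `ZMod n` has an `A`-weighted zero-sum subsequence of length `n`. -/
noncomputable def GaoC (n : ℕ) (A : Set (ZMod n)) : ℕ :=
  sInf {k | 0 < k ∧ ∀ S : List (ZMod n), S.length = k → HasWZSS A S n}

/-- The set of units of `ZMod n`. -/
def U (n : ℕ) : Set (ZMod n) := {x | IsUnit x}

/-- An `A`-extremal sequence for the Gao constant: a sequence of length `E_A(n) - 1`
with no `A`-weighted zero-sum subsequence of length `n`. -/
def IsGaoExtremal (n : ℕ) (A : Set (ZMod n)) (S : List (ZMod n)) : Prop :=
  S.length = GaoC n A - 1 ∧ ¬ HasWZSS A S n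

/-- `S` and `T` are `A`-equivalent: there are a unit `c`, weights `a i ∈ A` and a
permutation matching the multiset of terms `c * y j` with the multiset `a i * x i`. -/
def AEquiv {n : ℕ} (A : Set (ZMod n)) (S T : List (ZMod n)) : Prop :=
  ∃ c : ZMod n, IsUnit c ∧ ∃ w : List (ZMod n), w.length = S.length ∧
    (∀ a ∈ w, a ∈ A) ∧ (T.map fun y => c * y).Perm (List.zipWith (· * ·) w S)

/-! By the Chinese remainder theorem `ZMod n ≃+* Π p, ZMod (p ^ v_p n)`, a unit of `ZMod n` is
exactly a tuple of units, and a weighted sum vanishes iff each of its components does; so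
weights found separately for each prime power glue to unit weights modulo `n`. -/

theorem List.zipWith_ofFn {α β γ : Type*} {k : ℕ} (f : α → β → γ) (x : Fin k → α)
    (y : Fin k → β) : zipWith f (ofFn x) (ofFn y) = ofFn fun i => f (x i) (y i) :=
  ext_getElem (by simp) fun _ _ _ => by simp

theorem isWZSum_ofFn_iff {n k : ℕ} (A : Set (ZMod n)) (x : Fin k → ZMod n) :
    IsWZSum A (List.ofFn x) ↔
      ∃ w : Fin k → ZMod n, (∀ i, w i ∈ A) ∧ ∑ i, w i * x i = 0 := by
  constructor
  · rintro ⟨w, hlen, hA, hsum⟩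
    rw [List.length_ofFn] at hlen
    have hw : List.ofFn (fun i : Fin k => w[i]) = w :=
      List.ext_getElem (by simp [hlen]) fun _ _ _ => by simp
    rw [← hw] at hA hsum
    refine ⟨fun i => w[i], by simpa using hA, ?_⟩
    rwa [List.zipWith_ofFn, List.sum_ofFn] at hsum
  · rintro ⟨w, hA, hsum⟩
    refine ⟨List.ofFn w, by simp, by simpa using hA, ?_⟩
    rwa [List.zipWith_ofFn, List.sum_ofFn]

theorem isWZSum_units_ofFn_iff_of_ringEquiv {n k : ℕ} {ι : Type*} {m : ι → ℕ}
    (e : ZMod n ≃+* Π i, ZMod (m i)) (x : Fin k → ZMod n) :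
    IsWZSum (U n) (List.ofFn x) ↔ ∀ i, IsWZSum (U (m i)) (List.ofFn fun j => e (x j) i) := by
  simp only [isWZSum_ofFn_iff, U, Set.mem_ofPred_eq]
  constructor
  · rintro ⟨w, hw, hsum⟩ i
    refine ⟨fun j => e (w j) i, fun j => Pi.isUnit_iff.mp ((hw j).map e) i, ?_⟩
    simpa [map_sum, Finset.sum_apply] using congrFun (congrArg e hsum) i
  · intro h
    choose g hg hsum using h
    refine ⟨fun j => e.symm fun i => g i j,
      fun j => (Pi.isUnit_iff.mpr fun i => hg i j).map e.symm, ?_⟩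
    apply e.injective
    funext i
    simpa [map_sum, Finset.sum_apply] using hsum i

theorem ZMod.equivPi_apply {n : ℕ} (hn : n ≠ 0) (x : ZMod n) (p : n.primeFactors) :
    ZMod.equivPi n hn x p = ZMod.castHom (Nat.ordProj_dvd n p) _ x :=
  RingHom.congr_fun
    (RingHom.ext_zmod ((Pi.evalRingHom _ p).comp (ZMod.equivPi n hn).toRingHom) _) x

/-- A sequence in `ZMod n` is a `U(n)`-weighted zero-sum sequence iff for every prime
divisor `p` of `n`, its image in `ZMod (p ^ (v_p n))` is a `U(p ^ (v_p n))`-weighted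
zero-sum sequence. -/
theorem wzsum_iff_forall_prime (n : ℕ) (hn : 2 ≤ n) (S : List (ZMod n)) :
    IsWZSum (U n) S ↔
      ∀ p : ℕ, p.Prime → p ∣ n →
        IsWZSum (U (p ^ (n.factorization p)))
          (S.map (ZMod.castHom (Nat.ordProj_dvd n p) (ZMod (p ^ (n.factorization p))))) := by
  have hn0 : n ≠ 0 := by omega
  rw [← List.ofFn_get S, isWZSum_units_ofFn_iff_of_ringEquiv (ZMod.equivPi n hn0)]
  simp only [ZMod.equivPi_apply, List.map_ofFn]
  constructor
  · intro h p hp hpn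
    exact h ⟨p, Nat.mem_primeFactors.mpr ⟨hp, hpn, hn0⟩⟩
  · intro h p
    exact h p (Nat.prime_of_mem_primeFactors p.2) (Nat.dvd_of_mem_primeFactors p.2)
end

section
/- Let n = 2p, where p is an odd prime. A sequence S in Z_n is a U(n)-extremal sequence for the Gao constant if and only if S is U(n)-equivalent to a sequence of length n + 1 of one of the following forms: (i) (a, 2b, 0, …, 0) with n − 1 zeros, where a is odd and b is coprime to p; (ii) (b, p, …, p, 0, …, 0) where b is coprime to p, p occurs m times with m odd, and 0 occurs n − m times; (iii) (1, c, p, …, p) where c is even and p occurs n − 1 times. -/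
section UnitWeightedSum

variable {R S : Type*}

def HasUnitWeightedSum [Semiring R] (L : List R) (t : R) : Prop :=
  ∃ w : List R, w.length = L.length ∧ (∀ a ∈ w, IsUnit a) ∧
    (List.zipWith (· * ·) w L).sum = t

variable [Semiring R] [Semiring S]

@[simp]
theorem hasUnitWeightedSum_nil {t : R} : HasUnitWeightedSum [] t ↔ t = 0 := by
  simp [HasUnitWeightedSum, eq_comm]

theorem hasUnitWeightedSum_cons {x t : R} {L : List R} :
    HasUnitWeightedSum (x :: L) t ↔
      ∃ u s, IsUnit u ∧ HasUnitWeightedSum L s ∧ u * x + s = t := by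
  constructor
  · rintro ⟨_ | ⟨u, w⟩, hlen, hw, rfl⟩
    · simp at hlen
    · simp only [List.mem_cons, forall_eq_or_imp] at hw
      exact ⟨u, _, hw.1, ⟨w, by simpa using hlen, hw.2, rfl⟩, by simp⟩
  · rintro ⟨u, s, hu, ⟨w, hlen, hw, rfl⟩, rfl⟩
    exact ⟨u :: w, by simp [hlen], List.forall_mem_cons.2 ⟨hu, hw⟩, by simp⟩

theorem HasUnitWeightedSum.map {L : List R} {t : R} (h : HasUnitWeightedSum L t) (f : R →+* S) :
    HasUnitWeightedSum (L.map f) (f t) := by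
  induction L generalizing t with
  | nil => simp_all
  | cons x L ih =>
    obtain ⟨u, s, hu, hs, rfl⟩ := hasUnitWeightedSum_cons.1 h
    exact hasUnitWeightedSum_cons.2 ⟨f u, f s, hu.map f, ih hs, by simp⟩

theorem hasUnitWeightedSum_map_ringEquiv (e : R ≃+* S) {L : List R} {t : R} :
    HasUnitWeightedSum (L.map e) (e t) ↔ HasUnitWeightedSum L t := by
  refine ⟨fun h => ?_, fun h => h.map (e : R →+* S)⟩
  simpa [List.map_map, Function.comp_def] using h.map (e.symm : S →+* R)

theorem hasUnitWeightedSum_prod {L : List (R × S)} {t : R × S} :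
    HasUnitWeightedSum L t ↔
      HasUnitWeightedSum (L.map Prod.fst) t.1 ∧ HasUnitWeightedSum (L.map Prod.snd) t.2 := by
  induction L generalizing t with
  | nil => simp [Prod.ext_iff]
  | cons x L ih =>
    simp only [List.map_cons, hasUnitWeightedSum_cons, ih]
    constructor
    · rintro ⟨u, s, hu, ⟨h₁, h₂⟩, rfl⟩
      exact ⟨⟨u.1, s.1, (Prod.isUnit_iff.1 hu).1, h₁, rfl⟩,
        ⟨u.2, s.2, (Prod.isUnit_iff.1 hu).2, h₂, rfl⟩⟩
    · rintro ⟨⟨u₁, s₁, hu₁, h₁, e₁⟩, ⟨u₂, s₂, hu₂, h₂, e₂⟩⟩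
      exact ⟨(u₁, u₂), (s₁, s₂), Prod.isUnit_iff.2 ⟨hu₁, hu₂⟩, ⟨h₁, h₂⟩,
        Prod.ext e₁ e₂⟩

theorem hasUnitWeightedSum_iff_sum_eq [Subsingleton Rˣ] {L : List R} {t : R} :
    HasUnitWeightedSum L t ↔ L.sum = t := by
  induction L generalizing t with
  | nil => simp [eq_comm]
  | cons x L ih => simp [hasUnitWeightedSum_cons, ih, isUnit_iff_eq_one]

end UnitWeightedSum

theorem exists_isUnit_mul_eq_of_eq_zero_iff {G : Type*} [GroupWithZero G] {x y : G}
    (h : x = 0 ↔ y = 0) : ∃ u, IsUnit u ∧ u * x = y := by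
  by_cases hx : x = 0
  · exact ⟨1, isUnit_one, by simp [hx, h.1 hx]⟩
  · exact ⟨y * x⁻¹, (mul_ne_zero (mt h.2 hx) (inv_ne_zero hx)).isUnit, by simp [hx]⟩

theorem hasUnitWeightedSum_iff_of_field {F : Type*} [Field F] [DecidableEq F]
    (hF : ∀ a b : F, ∃ c, c ≠ a ∧ c ≠ b) {L : List F} {t : F} :
    HasUnitWeightedSum L t ↔
      (L.countP (· ≠ 0) = 0 → t = 0) ∧ (L.countP (· ≠ 0) = 1 → t ≠ 0) := by
  induction L generalizing t with
  | nil => simp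
  | cons x L ih =>
    rw [hasUnitWeightedSum_cons]
    simp only [isUnit_iff_ne_zero, ih]
    by_cases hx : x = 0
    · simp only [hx, mul_zero, zero_add, List.countP_cons, ne_eq, not_true_eq_false,
        decide_false, Bool.false_eq_true, ↓reduceIte, add_zero]
      exact ⟨fun ⟨_, s, _, hs, hst⟩ => hst ▸ hs,
        fun hs => ⟨1, t, one_ne_zero, hs, rfl⟩⟩
    · simp only [List.countP_cons, hx, ne_eq, not_false_eq_true, decide_true, ↓reduceIte,
        Nat.add_eq_zero_iff, one_ne_zero, and_false, false_imp_iff, Nat.add_eq_right, true_and]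
      constructor
      · rintro ⟨u, s, hu, ⟨hs, -⟩, rfl⟩ hL
        simpa [hs hL] using mul_ne_zero hu hx
      · intro ht
        by_cases hL : L.countP (· ≠ 0) = 0
        · exact ⟨t * x⁻¹, 0, mul_ne_zero (ht hL) (inv_ne_zero hx),
            ⟨fun _ => rfl, fun h => absurd (hL.symm.trans h) zero_ne_one⟩, by simp [hx]⟩
        · -- let the tail realise some `s ∉ {0, t}`; the head then contributes `t - s ≠ 0`
          obtain ⟨s, hs0, hst⟩ := hF 0 t
          refine ⟨(t - s) * x⁻¹, s, mul_ne_zero (sub_ne_zero.2 hst.symm) (inv_ne_zero hx),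
            ⟨fun h => absurd h hL, fun _ => hs0⟩, by simp [hx]⟩

section Weights

variable {M β : Type*} [Monoid M] {f : M → β}

theorem map_zipWith_mul_of_isUnit (hf : ∀ u x, IsUnit u → f (u * x) = f x) :
    ∀ {w S : List M}, w.length = S.length → (∀ a ∈ w, IsUnit a) →
      (List.zipWith (· * ·) w S).map f = S.map f
  | [], [], _, _ => rfl
  | u :: w, x :: S, hlen, hw => by
    rw [List.forall_mem_cons] at hw
    simp [hf u x hw.1, map_zipWith_mul_of_isUnit hf (by simpa using hlen) hw.2]

theorem exists_isUnit_weights_of_perm_map [DecidableEq M]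
    (hf : ∀ x y, f x = f y → ∃ u, IsUnit u ∧ u * x = y) :
    ∀ {S T : List M}, (S.map f).Perm (T.map f) →
      ∃ w : List M, w.length = S.length ∧ (∀ a ∈ w, IsUnit a) ∧
        (List.zipWith (· * ·) w S).Perm T
  | [], T, h => by
    obtain rfl : T = [] := List.map_eq_nil_iff.1 (List.Perm.nil_eq h).symm
    exact ⟨[], rfl, by simp, List.Perm.refl _⟩
  | x :: S, T, h => by
    obtain ⟨y, hyT, hxy⟩ := List.mem_map.1 (h.subset (List.mem_cons_self ..))
    have hT := List.perm_cons_erase hyT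
    obtain ⟨u, hu, rfl⟩ := hf x y hxy.symm
    obtain ⟨w, hlen, hw, hperm⟩ := exists_isUnit_weights_of_perm_map hf
      (S := S) (T := T.erase (u * x))
      ((List.perm_cons (f x)).1 (by simpa [hxy] using h.trans (hT.map f)))
    exact ⟨u :: w, by simp [hlen], List.forall_mem_cons.2 ⟨hu, hw⟩,
      (hperm.cons _).trans hT.symm⟩

end Weights

theorem AEquiv.length_eq {n : ℕ} {A : Set (ZMod n)} {S T : List (ZMod n)} (h : AEquiv A S T) :
    S.length = T.length := by
  obtain ⟨c, -, w, hlen, -, hperm⟩ := h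
  simpa [hlen] using hperm.length_eq.symm

theorem aequiv_units_iff_perm_map {n : ℕ} {β : Type*} {f : ZMod n → β}
    (hmul : ∀ u x, IsUnit u → f (u * x) = f x)
    (hassoc : ∀ x y, f x = f y → ∃ u, IsUnit u ∧ u * x = y) {S T : List (ZMod n)} :
    AEquiv (U n) S T ↔ (S.map f).Perm (T.map f) := by
  constructor
  · rintro ⟨c, hc, w, hlen, hw, hperm⟩
    have := hperm.map f
    rw [map_zipWith_mul_of_isUnit hmul hlen hw, List.map_map] at this
    simpa [Function.comp_def, hmul c _ hc] using this.symm
  · intro h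
    obtain ⟨w, hlen, hw, hperm⟩ := exists_isUnit_weights_of_perm_map hassoc h
    exact ⟨1, isUnit_one, w, hlen, hw, by simpa using hperm.symm⟩

theorem HasWZSS.mono {n t : ℕ} {A : Set (ZMod n)} {S T : List (ZMod n)} (h : HasWZSS A T t)
    (hTS : T.Sublist S) : HasWZSS A S t :=
  ⟨h.1, h.2.imp fun _ ⟨hsub, hrest⟩ => ⟨hsub.trans hTS, hrest⟩⟩

theorem ZMod.list_sum_eq_count_one (L : List (ZMod 2)) : L.sum = L.count 1 := by
  induction L with
  | nil => simp
  | cons x L ih =>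
    rcases (by decide : ∀ z : ZMod 2, z = 0 ∨ z = 1) x with rfl | rfl <;>
      simp [ih, add_comm]

theorem List.countP_fst_eq_count_add (L : List (Bool × Bool)) :
    L.countP Prod.fst = L.count (true, false) + L.count (true, true) := by
  induction L with
  | nil => simp
  | cons x L ih => rcases x with ⟨_ | _, _ | _⟩ <;> simp [ih] <;> omega

theorem List.countP_snd_eq_count_add (L : List (Bool × Bool)) :
    L.countP Prod.snd = L.count (true, true) + L.count (false, true) := by
  induction L with
  | nil => simp
  | cons x L ih => rcases x with ⟨_ | _, _ | _⟩ <;> simp [ih] <;> omega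

theorem List.length_eq_count_add (L : List (Bool × Bool)) :
    L.length = L.count (false, false) + L.count (true, false) + L.count (false, true) +
      L.count (true, true) := by
  induction L with
  | nil => simp
  | cons x L ih => rcases x with ⟨_ | _, _ | _⟩ <;> simp [ih] <;> omega

theorem ZMod.exists_ne_and_ne {p : ℕ} [NeZero p] (hp : 3 ≤ p) (a b : ZMod p) :
    ∃ c, c ≠ a ∧ c ≠ b := by
  obtain ⟨c, -, hc⟩ := Finset.exists_mem_notMem_of_card_lt_card
    (s := {a, b}) (t := Finset.univ) (by
      rw [Finset.card_univ, ZMod.card]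
      exact (Finset.card_le_two).trans_lt (by omega))
  exact ⟨c, by simp_all⟩

theorem ZMod.intCast_ne_zero_of_isCoprime {p : ℕ} (hp : p ≠ 1) {b : ℤ} (h : IsCoprime b p) :
    (b : ZMod p) ≠ 0 := by
  rw [Ne, ZMod.intCast_zmod_eq_zero_iff_dvd]
  intro hdvd
  rcases Int.isUnit_iff.1 (h.isUnit_of_dvd' hdvd dvd_rfl) with h1 | h1 <;> omega

section TwoP

variable {p : ℕ}

variable (p) in
def modTwo : ZMod (2 * p) →+* ZMod 2 := ZMod.castHom (dvd_mul_right 2 p) (ZMod 2)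

variable (p) in
def modP : ZMod (2 * p) →+* ZMod p := ZMod.castHom (dvd_mul_left p 2) (ZMod p)

theorem chineseRemainder_apply (h : Nat.Coprime 2 p) (x : ZMod (2 * p)) :
    ZMod.chineseRemainder h x = (modTwo p x, modP p x) := by
  ext <;> simp [ZMod.chineseRemainder, modTwo, modP]

/-- The class of `x` up to unit multiples, encoded as (`x` is odd, `x` is nonzero mod `p`). -/
def kind (x : ZMod (2 * p)) : Bool × Bool :=
  (decide (modTwo p x = 1), decide (modP p x ≠ 0))

def kindCount (S : List (ZMod (2 * p))) (k : Bool × Bool) : ℕ := (S.map kind).count k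

theorem kind_mul_of_isUnit [Fact p.Prime] {u : ZMod (2 * p)} (hu : IsUnit u)
    (x : ZMod (2 * p)) : kind (u * x) = kind x := by
  have h₂ : modTwo p u = 1 := isUnit_iff_eq_one.1 (hu.map _)
  have hp : modP p u ≠ 0 := (hu.map _).ne_zero
  simp [kind, h₂, hp]

theorem exists_isUnit_mul_eq_of_kind_eq [Fact p.Prime] (hp2 : p ≠ 2) {x y : ZMod (2 * p)}
    (h : kind x = kind y) : ∃ u, IsUnit u ∧ u * x = y := by
  have hcop : Nat.Coprime 2 p := Nat.coprime_two_left.2 ((Fact.out : p.Prime).odd_of_ne_two hp2)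
  set e := ZMod.chineseRemainder hcop
  simp only [kind, Prod.mk.injEq, decide_eq_decide] at h
  have h₂ : modTwo p x = modTwo p y := by
    have key : ∀ a b : ZMod 2, (a = 1 ↔ b = 1) → a = b := by decide
    exact key _ _ h.1
  obtain ⟨v, hv, hvx⟩ := exists_isUnit_mul_eq_of_eq_zero_iff (not_iff_not.1 h.2)
  refine ⟨e.symm (1, v), (Prod.isUnit_iff.2 ⟨isUnit_one, hv⟩).map e.symm, e.injective ?_⟩
  rw [map_mul, e.apply_symm_apply, chineseRemainder_apply, chineseRemainder_apply]
  simp [h₂, hvx]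

theorem aequiv_iff_kindCount_eq [Fact p.Prime] (hp2 : p ≠ 2) {S T : List (ZMod (2 * p))} :
    AEquiv (U (2 * p)) S T ↔ kindCount S = kindCount T := by
  rw [aequiv_units_iff_perm_map (fun u x hu => kind_mul_of_isUnit hu x)
    (fun _ _ => exists_isUnit_mul_eq_of_kind_eq hp2), List.perm_iff_count, funext_iff]
  rfl

theorem isWZSum_iff_kindCount [Fact p.Prime] (hp2 : p ≠ 2) (T : List (ZMod (2 * p))) :
    IsWZSum (U (2 * p)) T ↔ Even (kindCount T (true, false) + kindCount T (true, true)) ∧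
      kindCount T (true, true) + kindCount T (false, true) ≠ 1 := by
  have hp3 : 3 ≤ p := by have := (Fact.out : p.Prime).two_le; omega
  have hcop : Nat.Coprime 2 p := Nat.coprime_two_left.2 ((Fact.out : p.Prime).odd_of_ne_two hp2)
  set e := ZMod.chineseRemainder hcop
  calc IsWZSum (U (2 * p)) T ↔ HasUnitWeightedSum T 0 := Iff.rfl
    _ ↔ HasUnitWeightedSum (T.map e) (e 0) := (hasUnitWeightedSum_map_ringEquiv e).symm
    _ ↔ (T.map (modTwo p)).sum = 0 ∧ (T.map (modP p)).countP (· ≠ 0) ≠ 1 := by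
      rw [map_zero, hasUnitWeightedSum_prod, hasUnitWeightedSum_iff_sum_eq,
        hasUnitWeightedSum_iff_of_field (ZMod.exists_ne_and_ne hp3)]
      simp [e, List.map_map, Function.comp_def, chineseRemainder_apply]
    _ ↔ _ := by
      simp only [kindCount]
      rw [ZMod.list_sum_eq_count_one, ZMod.natCast_eq_zero_iff_even,
        ← List.countP_fst_eq_count_add, ← List.countP_snd_eq_count_add]
      simp [List.countP_map, List.count, Function.comp_def, kind, Bool.beq_eq_decide_eq]

theorem length_eq_kindCount_add (S : List (ZMod (2 * p))) :
    S.length = kindCount S (false, false) + kindCount S (true, false) +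
      kindCount S (false, true) + kindCount S (true, true) := by
  simpa [kindCount] using List.length_eq_count_add (S.map kind)

theorem kindCount_erase_add {S : List (ZMod (2 * p))} {x : ZMod (2 * p)} (hx : x ∈ S)
    (k : Bool × Bool) :
    kindCount (S.erase x) k + (if kind x = k then 1 else 0) = kindCount S k := by
  simp [kindCount, ((List.perm_cons_erase hx).map kind).count_eq k, List.count_cons]

theorem forall_erase_kindCount {P : (Bool × Bool → ℕ) → Prop} {S : List (ZMod (2 * p))}
    (h : ∀ x ∈ S, P (kindCount (S.erase x))) (k : Bool × Bool) (hk : 0 < kindCount S k) :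
    P fun k' => kindCount S k' - if k = k' then 1 else 0 := by
  obtain ⟨x, hx, rfl⟩ : ∃ x ∈ S, kind x = k := by
    simpa [kindCount, List.count_pos_iff] using hk
  convert h x hx using 1
  funext k'
  have := kindCount_erase_add hx k'
  omega

def ExtremalCounts (c : Bool × Bool → ℕ) : Prop :=
  (c (true, true) + c (false, true) = 1 ∧ Odd (c (true, false))) ∨
    (c (true, true) = 1 ∧ c (false, true) = 1 ∧ (c (true, false) = 0 ∨ c (false, false) = 0))

theorem not_hasWZSS_iff_extremalCounts [Fact p.Prime] (hp2 : p ≠ 2) {S : List (ZMod (2 * p))}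
    (hS : S.length = 2 * p + 1) :
    ¬ HasWZSS (U (2 * p)) S (2 * p) ↔ ExtremalCounts (kindCount S) := by
  have hlen := length_eq_kindCount_add S
  have hp := (Fact.out : p.Prime).pos
  constructor
  · intro h
    have key := forall_erase_kindCount (S := S)
      (P := fun c => ¬ (Even (c (true, false) + c (true, true)) ∧
        c (true, true) + c (false, true) ≠ 1))
      fun x hx hz => h ⟨by omega, S.erase x, List.erase_sublist, by
        rw [List.length_erase_of_mem hx]; omega, (isWZSum_iff_kindCount hp2 _).2 hz⟩
    simp only [Prod.forall, Bool.forall_bool] at key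
    simp [ExtremalCounts, Nat.even_iff, Nat.odd_iff] at key ⊢
    omega
  · rintro hc ⟨-, T, hTS, hT, hz⟩
    rw [isWZSum_iff_kindCount hp2] at hz
    have hle : ∀ k, kindCount T k ≤ kindCount S k := fun k => (hTS.map kind).count_le k
    have := hle (false, false)
    have := hle (true, false)
    have := hle (false, true)
    have := hle (true, true)
    have := length_eq_kindCount_add T
    simp only [ExtremalCounts, Nat.even_iff, Nat.odd_iff] at hc hz
    omega

theorem hasWZSS_of_length_eq_two_mul_add_two [Fact p.Prime] (hp2 : p ≠ 2)
    {S : List (ZMod (2 * p))}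
    (hS : S.length = 2 * p + 2) : HasWZSS (U (2 * p)) S (2 * p) := by
  by_contra h
  -- every one-term deletion would have extremal counts; no counts of total `2p + 2` allow that
  have key := forall_erase_kindCount (S := S) (P := ExtremalCounts) fun x hx =>
    (not_hasWZSS_iff_extremalCounts hp2 (by rw [List.length_erase_of_mem hx]; omega)).1
      fun h' => h (h'.mono List.erase_sublist)
  have hlen := length_eq_kindCount_add S
  simp only [Prod.forall, Bool.forall_bool] at key
  simp [ExtremalCounts, Nat.odd_iff] at key
  have := (Fact.out : p.Prime).two_le
  omega

@[simp]
theorem kindCount_cons (x : ZMod (2 * p)) (S : List (ZMod (2 * p))) (k : Bool × Bool) :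
    kindCount (x :: S) k = kindCount S k + if kind x = k then 1 else 0 := by
  simp [kindCount, List.count_cons]

@[simp]
theorem kindCount_append (S T : List (ZMod (2 * p))) (k : Bool × Bool) :
    kindCount (S ++ T) k = kindCount S k + kindCount T k := by
  simp [kindCount]

@[simp]
theorem kindCount_replicate (n : ℕ) (x : ZMod (2 * p)) (k : Bool × Bool) :
    kindCount (List.replicate n x) k = if kind x = k then n else 0 := by
  simp [kindCount, List.count_replicate]

@[simp]
theorem kind_intCast (a : ℤ) :
    kind (a : ZMod (2 * p)) = (decide (Odd a), decide ((a : ZMod p) ≠ 0)) := by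
  simp [kind, modTwo, modP, ZMod.intCast_eq_one_iff_odd]

@[simp]
theorem kind_zero : kind (0 : ZMod (2 * p)) = (false, false) := by
  simp [kind]

@[simp]
theorem kind_one [Fact p.Prime] : kind (1 : ZMod (2 * p)) = (true, true) := by
  simp [kind]

@[simp]
theorem kind_two [Fact p.Prime] (hp2 : p ≠ 2) : kind (2 : ZMod (2 * p)) = (false, true) := by
  have hp : Odd (p : ℤ) := (Int.odd_coe_nat p).2 ((Fact.out : p.Prime).odd_of_ne_two hp2)
  have h2 : ((2 : ℤ) : ZMod p) ≠ 0 :=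
    ZMod.intCast_ne_zero_of_isCoprime (Fact.out : p.Prime).ne_one (Int.isCoprime_two_left.2 hp)
  have h := kind_intCast (p := p) 2
  push_cast at h2 h
  simpa [h2, Int.odd_iff] using h

theorem kind_natCast_self (hp : Odd p) : kind (p : ZMod (2 * p)) = (true, false) := by
  simp [kind, modTwo, modP, ZMod.natCast_eq_one_iff_odd, hp]

variable (p) in
def IsExtremalNormalForm (T : List (ZMod (2 * p))) : Prop :=
  (∃ a b : ℤ, Odd a ∧ IsCoprime b (p : ℤ) ∧
      T = ((a : ZMod (2 * p)) :: ((2 * b : ℤ) : ZMod (2 * p)) ::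
        List.replicate (2 * p - 1) (0 : ZMod (2 * p)))) ∨
    (∃ (b : ℤ) (m : ℕ), IsCoprime b (p : ℤ) ∧ Odd m ∧ m ≤ 2 * p ∧
      T = ((b : ZMod (2 * p)) ::
        (List.replicate m ((p : ℕ) : ZMod (2 * p)) ++
          List.replicate (2 * p - m) (0 : ZMod (2 * p))))) ∨
    (∃ c : ℤ, Even c ∧
      T = ((1 : ZMod (2 * p)) :: (c : ZMod (2 * p)) ::
        List.replicate (2 * p - 1) ((p : ℕ) : ZMod (2 * p))))

theorem extremalCounts_of_isExtremalNormalForm [Fact p.Prime] (hp2 : p ≠ 2)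
    {T : List (ZMod (2 * p))} (hT : IsExtremalNormalForm p T) :
    ExtremalCounts (kindCount T) := by
  have hp := (Fact.out : p.Prime).odd_of_ne_two hp2
  have hp1 := (Fact.out : p.Prime).ne_one
  have hkp := kind_natCast_self hp
  rcases hT with ⟨a, b, ha, hb, rfl⟩ | ⟨b, m, hb, hm, hmle, rfl⟩ | ⟨c, hc, rfl⟩
  · have h2b : kind ((2 * b : ℤ) : ZMod (2 * p)) = (false, true) := by
      rw [kind_intCast, decide_eq_false (Int.not_odd_iff_even.2 (even_two_mul b)),
        decide_eq_true (ZMod.intCast_ne_zero_of_isCoprime hp1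
          ((Int.isCoprime_two_left.2 (by exact_mod_cast hp)).mul_left hb))]
    simp only [ExtremalCounts, kindCount_cons, kindCount_replicate, h2b, kind_intCast, ha,
      kind_zero]
    cases decide ((a : ZMod p) ≠ 0) <;> simp
  · have hbk : kind (b : ZMod (2 * p)) = (decide (Odd b), true) := by
      rw [kind_intCast, decide_eq_true (ZMod.intCast_ne_zero_of_isCoprime hp1 hb)]
    simp only [ExtremalCounts, kindCount_cons, kindCount_append, kindCount_replicate, hbk,
      kind_zero, hkp]
    cases decide (Odd b) <;> simp [hm]
  · simp only [ExtremalCounts, kindCount_cons, kindCount_replicate, kind_intCast, kind_one, hkp,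
      Int.not_odd_iff_even.2 hc]
    have : Odd (2 * p - 1) := by obtain ⟨k, hk⟩ := hp; exact ⟨p - 1, by omega⟩
    cases decide ((c : ZMod p) ≠ 0) <;> simp [this]

theorem exists_isExtremalNormalForm_of_extremalCounts [Fact p.Prime] (hp2 : p ≠ 2)
    {S : List (ZMod (2 * p))}
    (hS : S.length = 2 * p + 1) (h : ExtremalCounts (kindCount S)) :
    ∃ T, kindCount S = kindCount T ∧ IsExtremalNormalForm p T := by
  have hp := (Fact.out : p.Prime).odd_of_ne_two hp2
  have hcop2 : IsCoprime (2 : ℤ) p := Int.isCoprime_two_left.2 (by exact_mod_cast hp)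
  have hlen := length_eq_kindCount_add S
  have hkp := kind_natCast_self hp
  rcases h with ⟨hbc, ha⟩ | ⟨hb, hc, ha | hd⟩
  · obtain ⟨b, hb, hbk⟩ : ∃ b : ℤ, IsCoprime b p ∧
        kind (b : ZMod (2 * p)) = (decide (kindCount S (true, true) = 1), true) := by
      by_cases h1 : kindCount S (true, true) = 1
      · exact ⟨1, isCoprime_one_left, by simp [h1]⟩
      · exact ⟨2, hcop2, by simpa [h1] using kind_two hp2⟩
    refine ⟨_, ?_, Or.inr (Or.inl ⟨b, kindCount S (true, false), hb, ha, by omega, rfl⟩)⟩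
    funext k
    rcases k with ⟨_ | _, _ | _⟩ <;>
      by_cases h1 : kindCount S (true, true) = 1 <;> simp [hbk, hkp, h1] <;> omega
  · refine ⟨_, ?_, Or.inl ⟨1, 1, odd_one, isCoprime_one_left, rfl⟩⟩
    funext k
    rcases k with ⟨_ | _, _ | _⟩ <;> simp [kind_two hp2] <;> omega
  · refine ⟨_, ?_, Or.inr (Or.inr ⟨2, even_two, rfl⟩)⟩
    funext k
    rcases k with ⟨_ | _, _ | _⟩ <;> simp [kind_two hp2, hkp] <;> omega

theorem gaoC_two_mul [Fact p.Prime] (hp2 : p ≠ 2) : GaoC (2 * p) (U (2 * p)) = 2 * p + 2 := by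
  -- the prefixes of this sequence rule out every length `k ≤ 2p + 1`
  set T : List (ZMod (2 * p)) :=
    ((1 : ℤ) : ZMod (2 * p)) :: ((2 * 1 : ℤ) : ZMod (2 * p)) :: List.replicate (2 * p - 1) 0
  have hp := (Fact.out : p.Prime).two_le
  have hT : T.length = 2 * p + 1 := by simp [T]; omega
  have hT0 : ¬ HasWZSS (U (2 * p)) T (2 * p) :=
    (not_hasWZSS_iff_extremalCounts hp2 hT).2 (extremalCounts_of_isExtremalNormalForm hp2
      (Or.inl ⟨1, 1, odd_one, isCoprime_one_left, rfl⟩))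
  have hmem : 2 * p + 2 ∈ {k | 0 < k ∧ ∀ S : List (ZMod (2 * p)), S.length = k →
      HasWZSS (U (2 * p)) S (2 * p)} :=
    ⟨by omega, fun S hS => hasWZSS_of_length_eq_two_mul_add_two hp2 hS⟩
  refine le_antisymm (Nat.sInf_le hmem) (le_csInf ⟨_, hmem⟩ fun k ⟨hk, hall⟩ => ?_)
  by_contra! hlt
  exact hT0 ((hall (T.take k) (by simp; omega)).mono (List.take_sublist k T))

end TwoP

/-- For `n = 2 * p`, `p` an odd prime: a sequence `S` in `ZMod n` is a `U(n)`-extremal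
sequence for the Gao constant iff it is `U(n)`-equivalent to a sequence of length `n + 1`
of one of the forms `(a, 2b, 0, ..., 0)` with `a` odd and `b` coprime to `p`;
`(b, p, ..., p, 0, ..., 0)` with `b` coprime to `p` and an odd number `m` of `p`'s;
or `(1, c, p, ..., p)` with `c` even and `n - 1` copies of `p`. -/
theorem gao_extremal_iff_two_p (p : ℕ) (hp : p.Prime) (hpodd : p ≠ 2)
    (S : List (ZMod (2 * p))) :
    IsGaoExtremal (2 * p) (U (2 * p)) S ↔
      ∃ T : List (ZMod (2 * p)), AEquiv (U (2 * p)) S T ∧ T.length = 2 * p + 1 ∧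
        ((∃ a b : ℤ, Odd a ∧ IsCoprime b (p : ℤ) ∧
            T = ((a : ZMod (2 * p)) :: ((2 * b : ℤ) : ZMod (2 * p)) ::
              List.replicate (2 * p - 1) (0 : ZMod (2 * p)))) ∨
         (∃ (b : ℤ) (m : ℕ), IsCoprime b (p : ℤ) ∧ Odd m ∧ m ≤ 2 * p ∧
            T = ((b : ZMod (2 * p)) ::
              (List.replicate m ((p : ℕ) : ZMod (2 * p)) ++
                List.replicate (2 * p - m) (0 : ZMod (2 * p))))) ∨
         (∃ c : ℤ, Even c ∧
            T = ((1 : ZMod (2 * p)) :: (c : ZMod (2 * p)) ::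
              List.replicate (2 * p - 1) ((p : ℕ) : ZMod (2 * p))))) := by
  have : Fact p.Prime := ⟨hp⟩
  change _ ↔ ∃ T, AEquiv (U (2 * p)) S T ∧ T.length = 2 * p + 1 ∧ IsExtremalNormalForm p T
  rw [IsGaoExtremal, gaoC_two_mul hpodd]
  show S.length = 2 * p + 1 ∧ _ ↔ _
  constructor
  · rintro ⟨hS, hS0⟩
    obtain ⟨T, hST, hT⟩ := exists_isExtremalNormalForm_of_extremalCounts hpodd hS
      ((not_hasWZSS_iff_extremalCounts hpodd hS).1 hS0)
    have hST' := (aequiv_iff_kindCount_eq hpodd).2 hST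
    exact ⟨T, hST', hST'.length_eq ▸ hS, hT⟩
  · rintro ⟨T, hST, hT, hform⟩
    have hS : S.length = 2 * p + 1 := hST.length_eq.trans hT
    refine ⟨hS, (not_hasWZSS_iff_extremalCounts hpodd hS).2 ?_⟩
    rw [(aequiv_iff_kindCount_eq hpodd).1 hST]
    exact extremalCounts_of_isExtremalNormalForm hpodd hform
end

section
/- Let n = 2^r with r ≥ 1. If a sequence S = (x_1,…,x_k) in Z_n has an even number, at least two, of terms that are units of Z_n (i.e., odd terms), then S is a U(n)-weighted zero-sum sequence; that is, there exist units a_1,…,a_k of Z_n with ∑_{i=1}^k a_i x_i = 0. -/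
/-!
Reduction modulo 2 is a ring map `f : ZMod (2 ^ r) → ZMod 2` whose fibre over `1` is exactly the
set of units, so `f (∑ S)` is the number of unit terms mod 2, here `0`. If `u` is a unit term,
weighting every other term by `1` leaves the weight of `u` to be solved for, and the solution is
a unit precisely when the target `t` has `f t = f (∑ S)`.
-/

lemma List.zipWith_replicate_one_mul {M : Type*} [MulOneClass M] (S : List M) :
    List.zipWith (· * ·) (List.replicate S.length 1) S = S := by
  induction S with
  | nil => rfl
  | cons x S ih => simp [List.replicate_succ, ih]

lemma ZMod.isUnit_iff_castHom_two_eq_one {r : ℕ} (hr : r ≠ 0) (x : ZMod (2 ^ r)) :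
    IsUnit x ↔ ZMod.castHom (dvd_pow_self 2 hr) (ZMod 2) x = 1 := by
  have : NeZero (2 ^ r) := ⟨by positivity⟩
  rw [ZMod.castHom_apply, ZMod.cast_eq_val, ZMod.natCast_eq_one_iff_odd, ← Nat.coprime_two_right,
    ← Nat.coprime_pow_right_iff (Nat.pos_of_ne_zero hr), ← ZMod.isUnit_iff_coprime,
    ZMod.natCast_zmod_val]

lemma exists_mem_of_pcount_pos {α : Type*} {P : α → Prop} {S : List α} (h : 0 < pcount P S) :
    ∃ x ∈ S, P x := by
  obtain ⟨x, hxS, hx⟩ := List.countP_pos_iff.mp h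
  exact ⟨x, hxS, by simpa using hx⟩

lemma pcount_cons_of_pos {α : Type*} {P : α → Prop} {x : α} (S : List α) (hx : P x) :
    pcount P (x :: S) = pcount P S + 1 :=
  List.countP_cons_of_pos (by simpa using hx)

lemma pcount_cons_of_neg {α : Type*} {P : α → Prop} {x : α} (S : List α) (hx : ¬P x) :
    pcount P (x :: S) = pcount P S :=
  List.countP_cons_of_neg (by simpa using hx)

section ResidueTwo

variable {R : Type*} [CommRing R] (f : R →+* ZMod 2)

lemma map_sum_eq_pcount_isUnit (hf : ∀ x, IsUnit x ↔ f x = 1) (S : List R) :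
    f S.sum = pcount (fun x => IsUnit x) S := by
  induction S with
  | nil => simp [pcount]
  | cons x S ih =>
    by_cases hx : IsUnit x
    · rw [pcount_cons_of_pos S hx, List.sum_cons, map_add, ih, (hf x).mp hx]
      push_cast
      ring
    · have hx0 : f x = 0 := by
        have : ∀ y : ZMod 2, y = 0 ∨ y = 1 := by decide
        exact (this (f x)).resolve_right ((hf x).not.mp hx)
      rw [pcount_cons_of_neg S hx, List.sum_cons, map_add, ih, hx0, zero_add]

lemma exists_unit_weighted_sum_eq (hf : ∀ x, IsUnit x ↔ f x = 1) {S : List R}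
    (hS : ∃ x ∈ S, IsUnit x) {t : R} (ht : f t = f S.sum) :
    ∃ w : List R, w.length = S.length ∧ (∀ a ∈ w, IsUnit a) ∧
      (List.zipWith (· * ·) w S).sum = t := by
  induction S generalizing t with
  | nil => simp at hS
  | cons x S ih =>
    rw [List.sum_cons, map_add] at ht
    by_cases hx : IsUnit x
    · -- weight `1` on `S` forces the weight `(t - S.sum) * x⁻¹` on `x`, a unit since its residue
      -- is `f x = 1`
      have hu : IsUnit (t - S.sum) := by rw [hf, map_sub, ht, ← (hf x).mp hx]; ring
      refine ⟨(t - S.sum) * hx.unit⁻¹ :: List.replicate S.length 1, by simp, ?_, ?_⟩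
      · simp only [List.mem_cons, List.mem_replicate]
        rintro a (rfl | ⟨-, rfl⟩)
        exacts [hu.mul (Units.isUnit _), isUnit_one]
      · simp [List.zipWith_replicate_one_mul, mul_assoc]
    · obtain ⟨w, hlen, hunit, hsum⟩ := ih (by simpa [hx] using hS) (t := t - x)
        (by rw [map_sub, ht]; ring)
      refine ⟨1 :: w, by simp [hlen], ?_, by simp [hsum]⟩
      simpa using hunit

end ResidueTwo

/-- For `n = 2 ^ r`: if a sequence in `ZMod n` has an even number, at least two, of unit
terms, then it is a `U(n)`-weighted zero-sum sequence. -/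
theorem wzsum_of_even_units_two_pow (r : ℕ) (hr : 1 ≤ r) (S : List (ZMod (2 ^ r)))
    (heven : Even (pcount (fun x => IsUnit x) S))
    (h2 : 2 ≤ pcount (fun x => IsUnit x) S) :
    IsWZSum (U (2 ^ r)) S := by
  have hr₀ : r ≠ 0 := by omega
  have hf := ZMod.isUnit_iff_castHom_two_eq_one hr₀
  have hsum : ZMod.castHom (dvd_pow_self 2 hr₀) (ZMod 2) S.sum = 0 := by
    rw [map_sum_eq_pcount_isUnit _ hf, ZMod.natCast_eq_zero_iff_even]
    exact heven
  have hunit : ∃ x ∈ S, IsUnit x := exists_mem_of_pcount_pos (P := fun x => IsUnit x) (by omega)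
  exact exists_unit_weighted_sum_eq _ hf hunit (t := 0) (by rw [map_zero, hsum])
end
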